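/- Let n ≥ 6 and let A be an n×n real Higham² matrix with P = D = I and ‖A‖_max = 1, i.e. A = [[L̂, 0],[−𝟏ᵀ, 1]]·[[Û, u],[0, 2^{n−1}]] where L̂ is the (n−1)×(n−1) lower unitriangular matrix with all strictly lower entries −1, Û is an invertible (n−1)×(n−1) upper triangular matrix, u = (1, 2, 4, …, 2^{n−2})ᵀ, 𝟏 is the all-ones vector, every entry of L̂Û has absolute value at most 1, and every entry of the row vector 𝟏ᵀÛ has absolute value at most 1. Fix ε ∈ ℝ with |ε| > 2^{−(n−4)}, and suppose A + ε·e_1 e_{n−1}ᵀ admits an LU factorization with last pivot p_ε^{(1,n−1)}. Then |p_ε^{(1,n−1)}| ≤ 4/|ε| + 2^{−(n−6)}/ε². -/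

import Mathlib

open Matrix

/-- `M` is lower triangular with all diagonal entries equal to `1`. -/
def IsLowerUnitri {k : ℕ} (M : Matrix (Fin k) (Fin k) ℝ) : Prop :=
  (∀ i, M i i = 1) ∧ ∀ i j : Fin k, i < j → M i j = 0

/-- `M` is upper triangular. -/
def IsUpperTri {k : ℕ} (M : Matrix (Fin k) (Fin k) ℝ) : Prop :=
  ∀ i j : Fin k, j < i → M i j = 0

/-- The `m × m` lower unitriangular matrix with all strictly lower entries `-1`. -/
def highamLhat (m : ℕ) : Matrix (Fin m) (Fin m) ℝ :=
  Matrix.of fun i j => if j < i then -1 else if i = j then 1 else 0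

/-- The Higham² matrix with `P = D = I` determined by the invertible upper triangular
matrix `Û`, i.e. `A = [[L̂, 0],[-𝟏ᵀ, 1]] * [[Û, u],[0, 2^(n-1)]]` with
`u = (1, 2, …, 2^(n-2))ᵀ`, viewed as an `n × n = (m+1) × (m+1)` matrix. -/
noncomputable def highamA {m : ℕ} (Uhat : Matrix (Fin m) (Fin m) ℝ) :
    Matrix (Fin (m + 1)) (Fin (m + 1)) ℝ :=
  Matrix.reindex finSumFinEquiv finSumFinEquiv
    (Matrix.fromBlocks (highamLhat m) 0 (Matrix.of fun (_ : Fin 1) (_ : Fin m) => (-1 : ℝ))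
        (Matrix.of fun (_ : Fin 1) (_ : Fin 1) => (1 : ℝ)) *
      Matrix.fromBlocks Uhat (Matrix.of fun (k : Fin m) (_ : Fin 1) => (2 : ℝ) ^ (k : ℕ)) 0
        (Matrix.of fun (_ : Fin 1) (_ : Fin 1) => (2 : ℝ) ^ m))

/-- The first column of the inverse of `highamLhat`. -/
noncomputable def cseq : ℕ → ℝ := fun k => if k = 0 then 1 else 2 ^ (k - 1)

lemma sum_cseq (i : ℕ) : ∑ k ∈ Finset.range i, cseq k = if i = 0 then 0 else 2 ^ (i - 1) := by
  induction i with
  | zero => simp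
  | succ n ih =>
    rw [Finset.sum_range_succ, ih, if_neg n.succ_ne_zero]
    rcases Nat.eq_zero_or_pos n with h | h
    · subst h; simp [cseq]
    · obtain ⟨j, rfl⟩ : ∃ j, n = j + 1 := ⟨n - 1, by omega⟩
      simp only [if_neg (Nat.succ_ne_zero j), cseq, Nat.add_sub_cancel]
      rw [pow_succ]
      ring

lemma key_sum {m : ℕ} (i : Fin m) :
    ∑ k : Fin m, highamLhat m i k * cseq (k : ℕ) = if (i : ℕ) = 0 then 1 else 0 := by
  have h1 : ∑ k : Fin m, highamLhat m i k * cseq (k : ℕ) =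
      ∑ k : Fin m, (fun k : ℕ =>
        (if k < (i : ℕ) then (-1 : ℝ) else if (i : ℕ) = k then 1 else 0) * cseq k) (k : ℕ) :=
    Finset.sum_congr rfl fun k _ => by
      simp only [highamLhat, Matrix.of_apply, Fin.lt_def, Fin.ext_iff]
  rw [h1, Fin.sum_univ_eq_sum_range
    (fun k : ℕ => (if k < (i : ℕ) then (-1 : ℝ) else if (i : ℕ) = k then 1 else 0) * cseq k) m]
  calc ∑ k ∈ Finset.range m,
          (if k < (i : ℕ) then (-1 : ℝ) else if (i : ℕ) = k then 1 else 0) * cseq k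
      = ∑ k ∈ Finset.range ((i : ℕ) + 1),
          (if k < (i : ℕ) then (-1 : ℝ) else if (i : ℕ) = k then 1 else 0) * cseq k := by
        rw [Finset.sum_subset (Finset.range_subset_range.mpr i.isLt)]
        intro k _ hk
        simp only [Finset.mem_range, not_lt] at hk
        rw [if_neg (by omega), if_neg (by omega), zero_mul]
    _ = ∑ k ∈ Finset.range (i : ℕ), (-1 : ℝ) * cseq k + cseq (i : ℕ) := by
        rw [Finset.sum_range_succ, if_neg (by omega), if_pos rfl, one_mul]
        congr 1
        exact Finset.sum_congr rfl fun k hk => by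
          rw [if_pos (Finset.mem_range.mp hk)]
    _ = if (i : ℕ) = 0 then 1 else 0 := by
        rw [← Finset.mul_sum, sum_cseq]
        rcases Nat.eq_zero_or_pos (i : ℕ) with h | h
        · rw [h]; simp [cseq]
        · rw [if_neg (by omega), if_neg (by omega), cseq, if_neg (by omega)]
          ring

lemma sum_cseq_fin {m : ℕ} (hm : 1 ≤ m) : ∑ k : Fin m, cseq (k : ℕ) = 2 ^ (m - 1) := by
  rw [Fin.sum_univ_eq_sum_range, sum_cseq, if_neg (by omega)]

set_option maxHeartbeats 1000000 in
theorem stmt_17 {m : ℕ} (hm : 5 ≤ m)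
    (Uhat : Matrix (Fin m) (Fin m) ℝ) (hUhat : IsUpperTri Uhat) (hUdet : IsUnit Uhat.det)
    (hLU : ∀ a b : Fin m, |(highamLhat m * Uhat) a b| ≤ 1)
    (hrowU : ∀ b : Fin m, |Matrix.vecMul (fun _ => (1 : ℝ)) Uhat b| ≤ 1)
    (ε : ℝ) (hε : ((2 : ℝ) ^ (m - 3))⁻¹ < |ε|)
    (L' U' : Matrix (Fin (m + 1)) (Fin (m + 1)) ℝ)
    (hL' : IsLowerUnitri L') (hU' : IsUpperTri U')
    (hfact : highamA Uhat +
        Matrix.single (⟨0, by omega⟩ : Fin (m + 1)) (⟨m - 1, by omega⟩ : Fin (m + 1)) ε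
      = L' * U') :
    |U' (Fin.last m) (Fin.last m)| ≤ 4 / |ε| + ((2 : ℝ) ^ (m - 5))⁻¹ / ε ^ 2 := by
  obtain ⟨hL'diag, hL'low⟩ := hL'
  have hm1 : m - 1 < m := by omega
  set im1 : Fin m := ⟨m - 1, hm1⟩ with him1_def
  set d : ℝ := Uhat im1 im1 with hd_def
  -- `|d| ≤ 1`
  have habs_d : |d| ≤ 1 := by
    have hsum2d : (highamLhat m * Uhat) im1 im1
        + Matrix.vecMul (fun _ => (1 : ℝ)) Uhat im1 = 2 * d := by
      have hv : Matrix.vecMul (fun _ => (1 : ℝ)) Uhat im1 = ∑ k, Uhat k im1 := by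
        simp [Matrix.vecMul, dotProduct]
      rw [Matrix.mul_apply, hv, ← Finset.sum_add_distrib]
      rw [Finset.sum_eq_single im1]
      · simp [highamLhat]; ring
      · intro k _ hk
        rcases lt_or_gt_of_ne hk with h | h
        · simp only [highamLhat, Matrix.of_apply, if_pos h]
          ring
        · rw [hUhat k im1 h]
          ring
      · exact fun h => absurd (Finset.mem_univ im1) h
    have h1 := hLU im1 im1
    have h2 := hrowU im1
    have h3 := abs_add_le ((highamLhat m * Uhat) im1 im1)
      (Matrix.vecMul (fun _ => (1 : ℝ)) Uhat im1)
    rw [hsum2d, abs_mul] at h3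
    simp only [abs_two] at h3
    linarith
  -- basic positivity
  have htpos : (0 : ℝ) < |ε| := lt_trans (by positivity) hε
  have hεne : ε ≠ 0 := by
    intro h; rw [h, abs_zero] at htpos; exact lt_irrefl 0 htpos
  have hq2 : 2 < |ε| * 2 ^ (m - 2) := by
    have hp : (0 : ℝ) < 2 ^ (m - 3) := by positivity
    have h1 : ((2 : ℝ) ^ (m - 3))⁻¹ * 2 ^ (m - 3) < |ε| * 2 ^ (m - 3) :=
      mul_lt_mul_of_pos_right hε hp
    have h2 : (2 : ℝ) ^ (m - 2) = 2 ^ (m - 3) * 2 := by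
      rw [← pow_succ]; congr 1; omega
    rw [inv_mul_cancel₀ (ne_of_gt hp)] at h1
    rw [h2, ← mul_assoc]
    linarith
  set D : ℝ := d + ε * 2 ^ (m - 2) with hD_def
  have hDabs : |ε| * 2 ^ (m - 2) - 1 ≤ |D| := by
    have h1 : |(-d) + D| ≤ |(-d)| + |D| := abs_add_le _ _
    rw [show -d + D = ε * 2 ^ (m - 2) from by rw [hD_def]; ring, abs_neg, abs_mul,
      abs_of_pos (show (0 : ℝ) < 2 ^ (m - 2) by positivity)] at h1
    linarith
  have hDpos : 1 < |D| := by linarith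
  have hDne : D ≠ 0 := by
    intro h; rw [h, abs_zero] at hDpos; linarith
  -- determinant of Uhat
  have hUtri : Uhat.BlockTriangular id := fun i j hij => hUhat i j hij
  have hdetU : Uhat.det = d * ∏ i ∈ Finset.univ.erase im1, Uhat i i := by
    rw [Matrix.det_of_upperTriangular hUtri]
    exact (Finset.mul_prod_erase _ _ (Finset.mem_univ im1)).symm
  have hUne : Uhat.det ≠ 0 := hUdet.ne_zero
  have hPne : (∏ i ∈ Finset.univ.erase im1, Uhat i i) ≠ 0 := by
    intro h; rw [hdetU, h, mul_zero] at hUne; exact hUne rfl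
  -- matrices in the sum world
  set u1 : Matrix (Fin m) (Fin 1) ℝ := Matrix.of fun k _ => (2 : ℝ) ^ (k : ℕ) with hu1_def
  set Lb : Matrix (Fin m ⊕ Fin 1) (Fin m ⊕ Fin 1) ℝ :=
    Matrix.fromBlocks (highamLhat m) 0 (Matrix.of fun _ _ => (-1 : ℝ))
      (Matrix.of fun _ _ => (1 : ℝ)) with hLb_def
  set Ub : Matrix (Fin m ⊕ Fin 1) (Fin m ⊕ Fin 1) ℝ :=
    Matrix.fromBlocks Uhat u1 0 (Matrix.of fun _ _ => (2 : ℝ) ^ m) with hUb_def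
  set V : Matrix (Fin m) (Fin m) ℝ :=
    Matrix.of fun i j => Uhat i j + (if j = im1 then ε * cseq (i : ℕ) else 0) with hV_def
  set rw1 : Matrix (Fin 1) (Fin m) ℝ :=
    Matrix.of fun _ j => if j = im1 then ε * 2 ^ (m - 1) else 0 with hrw1_def
  set W : Matrix (Fin m ⊕ Fin 1) (Fin m ⊕ Fin 1) ℝ :=
    Matrix.fromBlocks V u1 rw1 (Matrix.of fun _ _ => (2 : ℝ) ^ m) with hW_def
  set E1 : Matrix (Fin m ⊕ Fin 1) (Fin m ⊕ Fin 1) ℝ :=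
    Matrix.fromBlocks (Matrix.single (⟨0, by omega⟩ : Fin m) im1 ε) 0 0 0 with hE1_def
  have hcim1 : cseq ((im1 : ℕ)) = 2 ^ (m - 2) := by
    show cseq (m - 1) = 2 ^ (m - 2)
    rw [cseq]
    rw [if_neg (show ¬(m - 1 = 0) by omega)]
    congr 1
  -- Claim A : Lb * W = Lb * Ub + E1
  have hA : Lb * W = Lb * Ub + E1 := by
    rw [hLb_def, hW_def, hUb_def, hE1_def, Matrix.fromBlocks_multiply,
      Matrix.fromBlocks_multiply, Matrix.fromBlocks_add]
    apply Matrix.fromBlocks_inj.mpr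
    refine ⟨?_, by simp, ?_, by simp⟩
    · -- top-left block
      ext i j
      simp only [Matrix.add_apply, Matrix.mul_apply, hV_def, Matrix.of_apply, mul_add,
        Matrix.zero_mul, Matrix.zero_apply, add_zero, Matrix.single]
      rw [Finset.sum_add_distrib]
      congr 1
      by_cases hj : j = im1
      · subst hj
        simp only [eq_self_iff_true, if_true, and_true, true_and]
        rw [show (∑ x : Fin m, highamLhat m i x * (ε * cseq (x : ℕ)))
            = ε * ∑ x : Fin m, highamLhat m i x * cseq (x : ℕ) from by
          rw [Finset.mul_sum]; exact Finset.sum_congr rfl fun k _ => by ring]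
        rw [key_sum]
        by_cases hi : (i : ℕ) = 0
        · rw [if_pos hi, if_pos (Fin.ext hi.symm : (⟨0, by omega⟩ : Fin m) = i)]
          ring
        · rw [if_neg hi, if_neg (fun h0 => hi (by rw [← h0]))]
          ring
      · simp only [if_neg hj, mul_zero, Finset.sum_const_zero]
        rw [if_neg (by rintro ⟨-, h0⟩; exact hj h0.symm)]
    · -- bottom-left block
      ext i j
      simp only [Matrix.add_apply, Matrix.mul_apply, hV_def, hrw1_def, Matrix.of_apply,
        Matrix.mul_zero, Matrix.zero_apply, add_zero, neg_one_mul, one_mul, neg_add]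
      rw [Finset.sum_add_distrib]
      rw [Fin.sum_univ_one]
      by_cases hj : j = im1
      · subst hj
        simp only [eq_self_iff_true, if_true, and_true, true_and]
        have hc : ∑ k : Fin m, -(ε * cseq (k : ℕ)) = -(ε * 2 ^ (m - 1)) := by
          simp only [← neg_mul]
          rw [← Finset.mul_sum, sum_cseq_fin (show 1 ≤ m by omega)]
        rw [hc]
        ring
      · simp only [if_neg hj, neg_zero, add_zero, Finset.sum_const_zero]

  -- Claim B : W = L2 * U2
  set wv : Matrix (Fin 1) (Fin m) ℝ :=
    Matrix.of fun _ j => if j = im1 then ε * 2 ^ (m - 1) / D else 0 with hwv_def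
  set s : ℝ := 2 ^ m * d / D with hs_def
  set L2 : Matrix (Fin m ⊕ Fin 1) (Fin m ⊕ Fin 1) ℝ :=
    Matrix.fromBlocks 1 0 wv 1 with hL2_def
  set U2 : Matrix (Fin m ⊕ Fin 1) (Fin m ⊕ Fin 1) ℝ :=
    Matrix.fromBlocks V u1 0 (Matrix.of fun _ _ => s) with hU2_def
  have hpow : (2 : ℝ) ^ (m - 1) * 2 ^ (m - 1) = 2 ^ m * 2 ^ (m - 2) := by
    rw [← pow_add, ← pow_add]; congr 1; omega
  have hVim1 : V im1 im1 = D := by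
    show Uhat im1 im1 + (if im1 = im1 then ε * cseq ((im1 : ℕ)) else 0) = D
    rw [if_pos rfl, hcim1, hD_def]
  have hB : W = L2 * U2 := by
    rw [hW_def, hL2_def, hU2_def, Matrix.fromBlocks_multiply]
    simp only [Matrix.one_mul, Matrix.mul_zero, Matrix.mul_one, Matrix.zero_mul,
      add_zero, zero_add]
    apply Matrix.fromBlocks_inj.mpr
    refine ⟨rfl, rfl, ?_, ?_⟩
    · -- bottom-left : rw1 = wv * V
      ext i j
      rw [Matrix.mul_apply, Finset.sum_eq_single im1]
      · rw [show wv i im1 = ε * 2 ^ (m - 1) / D from by simp [hwv_def]]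
        by_cases hj : j = im1
        · subst hj
          rw [hVim1, div_mul_cancel₀ _ hDne, hrw1_def]
          simp
        · have hjlt : j < im1 := by
            have h1 := j.isLt
            have h2 : (j : ℕ) ≠ m - 1 := fun h => hj (Fin.ext h)
            have h4 : (im1 : ℕ) = m - 1 := rfl
            exact Fin.lt_def.mpr (by omega)
          rw [show V im1 j = 0 from by
            simp only [hV_def, Matrix.of_apply, if_neg hj, add_zero]
            exact hUhat im1 j hjlt]
          rw [mul_zero, hrw1_def]
          simp only [Matrix.of_apply, if_neg hj]
      · intro k _ hk
        rw [show wv i k = 0 from by simp only [hwv_def, Matrix.of_apply, if_neg hk], zero_mul]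
      · exact fun h => absurd (Finset.mem_univ im1) h
    · -- bottom-right
      ext i j
      rw [Matrix.add_apply, Matrix.mul_apply, Finset.sum_eq_single im1]
      · rw [show wv i im1 = ε * 2 ^ (m - 1) / D from by simp [hwv_def]]
        rw [show u1 im1 j = 2 ^ (m - 1) from by
          show (2 : ℝ) ^ ((im1 : ℕ)) = 2 ^ (m - 1)
          rfl]
        simp only [Matrix.of_apply, hs_def]
        rw [div_mul_eq_mul_div, ← add_div, eq_comm, div_eq_iff hDne]
        rw [hD_def]
        linear_combination ε * hpow
      · intro k _ hk
        rw [show wv i k = 0 from by simp only [hwv_def, Matrix.of_apply, if_neg hk], zero_mul]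
      · exact fun h => absurd (Finset.mem_univ im1) h
  -- determinants
  have hLhat_tri : (highamLhat m).BlockTriangular OrderDual.toDual := by
    intro i j hij
    have hij' : i < j := hij
    simp only [highamLhat, Matrix.of_apply]
    rw [if_neg (lt_asymm hij'), if_neg (ne_of_lt hij')]
  have hdetLhat : (highamLhat m).det = 1 := by
    rw [Matrix.det_of_lowerTriangular _ hLhat_tri]
    apply Finset.prod_eq_one
    intro i _
    simp [highamLhat]
  have hdetLb : Lb.det = 1 := by
    rw [hLb_def, Matrix.det_fromBlocks_zero₁₂, hdetLhat, Matrix.det_fin_one]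
    simp
  have hdetL2 : L2.det = 1 := by
    rw [hL2_def, Matrix.det_fromBlocks_zero₁₂]
    simp
  have hVtri : V.BlockTriangular id := by
    intro i j hij
    have hij' : (j : ℕ) < (i : ℕ) := hij
    have hjne : j ≠ im1 := by
      intro h
      have h2 : (j : ℕ) = m - 1 := by rw [h]
      have h3 := i.isLt
      omega
    simp only [hV_def, Matrix.of_apply, if_neg hjne, add_zero]
    exact hUhat i j hij
  have hdetV : V.det = D * ∏ i ∈ Finset.univ.erase im1, Uhat i i := by
    rw [Matrix.det_of_upperTriangular hVtri,
      ← Finset.mul_prod_erase _ _ (Finset.mem_univ im1), hVim1]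
    congr 1
    exact Finset.prod_congr rfl fun i hi => by
      simp only [hV_def, Matrix.of_apply, if_neg (Finset.ne_of_mem_erase hi), add_zero]
  have hVne : V.det ≠ 0 := by
    rw [hdetV]; exact mul_ne_zero hDne hPne
  have hdetW : W.det = V.det * s := by
    rw [hB, Matrix.det_mul, hdetL2, one_mul, hU2_def, Matrix.det_fromBlocks_zero₂₁,
      Matrix.det_fin_one]
    simp
  -- relating to the factorization
  have hstd : Matrix.single (⟨0, by omega⟩ : Fin (m + 1)) (⟨m - 1, by omega⟩ : Fin (m + 1)) ε
      = Matrix.reindex finSumFinEquiv finSumFinEquiv E1 := by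
    ext i j
    rw [Matrix.reindex_apply, Matrix.submatrix_apply]
    obtain ⟨i', rfl⟩ := finSumFinEquiv.surjective i
    obtain ⟨j', rfl⟩ := finSumFinEquiv.surjective j
    rw [Equiv.symm_apply_apply, Equiv.symm_apply_apply]
    rcases i' with i' | i' <;> rcases j' with j' | j'
    · simp only [hE1_def, Matrix.fromBlocks_apply₁₁, finSumFinEquiv_apply_left,
        Matrix.single, Matrix.of_apply]
      refine if_congr ?_ rfl rfl
      rw [him1_def]
      simp [Fin.ext_iff]
    · simp only [hE1_def, Matrix.fromBlocks_apply₁₂, Matrix.zero_apply,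
        finSumFinEquiv_apply_left, finSumFinEquiv_apply_right,
        Matrix.single, Matrix.of_apply]
      rw [if_neg]
      rintro ⟨-, h2⟩
      have h3 := congrArg Fin.val h2
      simp only [Fin.coe_natAdd] at h3
      omega
    · simp only [hE1_def, Matrix.fromBlocks_apply₂₁, Matrix.zero_apply,
        finSumFinEquiv_apply_left, finSumFinEquiv_apply_right,
        Matrix.single, Matrix.of_apply]
      rw [if_neg]
      rintro ⟨h1, -⟩
      have h3 := congrArg Fin.val h1
      simp only [Fin.coe_natAdd] at h3
      omega
    · simp only [hE1_def, Matrix.fromBlocks_apply₂₂, Matrix.zero_apply,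
        finSumFinEquiv_apply_right, Matrix.single, Matrix.of_apply]
      rw [if_neg]
      rintro ⟨h1, -⟩
      have h3 := congrArg Fin.val h1
      simp only [Fin.coe_natAdd] at h3
      omega
  have hM' : L' * U' = Matrix.reindex finSumFinEquiv finSumFinEquiv (Lb * W) := by
    have h0 : highamA Uhat = Matrix.reindex finSumFinEquiv finSumFinEquiv (Lb * Ub) := rfl
    rw [← hfact, h0, hstd, hA]
    simp [Matrix.reindex_apply, Matrix.submatrix_add]
  have hdetM : (L' * U').det = V.det * s := by
    rw [hM', Matrix.det_reindex_self, Matrix.det_mul, hdetLb, one_mul, hdetW]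
  -- the leading principal submatrix
  have hsubfact : (L' * U').submatrix Fin.castSucc Fin.castSucc
      = L'.submatrix Fin.castSucc Fin.castSucc * U'.submatrix Fin.castSucc Fin.castSucc := by
    ext i j
    simp only [Matrix.submatrix_apply, Matrix.mul_apply]
    rw [Fin.sum_univ_castSucc]
    simp [hL'low _ _ (Fin.castSucc_lt_last i)]
  have hsubV : (L' * U').submatrix Fin.castSucc Fin.castSucc = highamLhat m * V := by
    ext i j
    rw [Matrix.submatrix_apply, hM', Matrix.reindex_apply, Matrix.submatrix_apply]
    have hcast : ∀ k : Fin m, finSumFinEquiv.symm (Fin.castSucc k) = Sum.inl k := fun k =>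
      finSumFinEquiv_symm_apply_castAdd k
    rw [hcast i, hcast j]
    rw [hLb_def, hW_def, Matrix.fromBlocks_multiply, Matrix.fromBlocks_apply₁₁]
    simp [Matrix.zero_mul]
  have hL'subtri : (L'.submatrix Fin.castSucc Fin.castSucc).BlockTriangular OrderDual.toDual := by
    intro i j hij
    have hij' : i < j := hij
    exact hL'low _ _ (Fin.castSucc_lt_castSucc_iff.mpr hij')
  have hL'subdet : (L'.submatrix Fin.castSucc Fin.castSucc).det = 1 := by
    rw [Matrix.det_of_lowerTriangular _ hL'subtri]
    apply Finset.prod_eq_one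
    intro i _
    simp [Matrix.submatrix_apply, hL'diag]
  have hU'subtri : (U'.submatrix Fin.castSucc Fin.castSucc).BlockTriangular id := by
    intro i j hij
    have hij' : j < i := hij
    exact hU' _ _ (Fin.castSucc_lt_castSucc_iff.mpr hij')
  have hU'subdet : (U'.submatrix Fin.castSucc Fin.castSucc).det
      = ∏ i : Fin m, U' i.castSucc i.castSucc := by
    rw [Matrix.det_of_upperTriangular hU'subtri]
    rfl
  have hL'tri : L'.BlockTriangular OrderDual.toDual := fun i j hij => hL'low i j hij
  have hU'tri : U'.BlockTriangular id := fun i j hij => hU' i j hij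
  have hdetfull : (L' * U').det
      = (∏ i : Fin m, U' i.castSucc i.castSucc) * U' (Fin.last m) (Fin.last m) := by
    rw [Matrix.det_mul, Matrix.det_of_lowerTriangular _ hL'tri,
      Matrix.det_of_upperTriangular hU'tri]
    rw [Finset.prod_eq_one fun i _ => hL'diag i, one_mul]
    exact Fin.prod_univ_castSucc _
  have hprodV : V.det = ∏ i : Fin m, U' i.castSucc i.castSucc := by
    have h1 := congrArg Matrix.det hsubV
    rw [hsubfact, Matrix.det_mul, hL'subdet, one_mul, hU'subdet, Matrix.det_mul,
      hdetLhat, one_mul] at h1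
    exact h1.symm
  have hlast : U' (Fin.last m) (Fin.last m) = s := by
    have h1 : V.det * U' (Fin.last m) (Fin.last m) = V.det * s := by
      rw [hprodV, ← hdetfull, hdetM, hprodV]
    exact mul_left_cancel₀ hVne h1
  -- the final bound
  rw [hlast, hs_def]
  have habs1 : |2 ^ m * d / D| ≤ 2 ^ m / (|ε| * 2 ^ (m - 2) - 1) := by
    rw [abs_div, abs_mul, abs_of_pos (show (0 : ℝ) < (2 : ℝ) ^ m by positivity)]
    apply div_le_div₀ (by positivity) ?_ (by linarith) hDabs
    nlinarith [abs_nonneg d, pow_pos (show (0:ℝ) < 2 by norm_num) m]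
  have hq : (0 : ℝ) < 2 ^ (m - 2) := by positivity
  have h4q : (2 : ℝ) ^ m = 4 * 2 ^ (m - 2) := by
    rw [show (4 : ℝ) = 2 ^ 2 by norm_num, mul_comm, ← pow_add]
    congr 1
    omega
  have h8 : ((2 : ℝ) ^ (m - 5))⁻¹ = 8 / 2 ^ (m - 2) := by
    rw [eq_div_iff (ne_of_gt hq)]
    rw [show (2 : ℝ) ^ (m - 2) = 2 ^ (m - 5) * 8 from by
      rw [show (8 : ℝ) = 2 ^ 3 by norm_num, ← pow_add]; congr 1; omega]
    rw [← mul_assoc, inv_mul_cancel₀ (by positivity), one_mul]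
  have key : ∀ t : ℝ, 0 < t → 2 < t * 2 ^ (m - 2) →
      2 ^ m / (t * 2 ^ (m - 2) - 1) ≤ 4 / t + 8 / 2 ^ (m - 2) / t ^ 2 := by
    intro t ht h2
    have hRHS : 4 / t + 8 / 2 ^ (m - 2) / t ^ 2
        = (4 * 2 ^ (m - 2) * t + 8) / (2 ^ (m - 2) * t ^ 2) := by
      field_simp
    rw [hRHS, h4q, div_le_div_iff₀ (by linarith) (by positivity)]
    nlinarith [hq, mul_pos ht hq]
  rw [h8, ← sq_abs ε]
  exact le_trans habs1 (key |ε| htpos hq2)
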